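/- arXiv:2205.15022 — 4 statements merged into one kernel-verified Lean document; each statement's English description precedes it below -/
import Mathlib

section
/- For 0 < p ≤ 1, the function N : ℝ × ℝ → [0,1] defined by N(x,t) = t/(t + |x|^p) for t > 0 and N(x,t) = 0 for t ≤ 0, together with φ(c) = |c|^p, K = 2^p, and the minimum t-norm, is a fuzzy strong φ-b-norm on ℝ; in particular N(x+y, 2^p·s + t) ≥ min(N(x,s), N(y,t)) for all x,y ∈ ℝ and s,t > 0. -/
open Filter Topology

/-- A fuzzy strong φ-b-norm on a real linear space `X`. -/
structure FuzzyStrongPhiBNorm (X : Type*) [AddCommGroup X] [Module ℝ X] where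
  N : X → ℝ → ℝ
  phi : ℝ → ℝ
  K : ℝ
  op : ℝ → ℝ → ℝ
  K_ge_one : 1 ≤ K
  N_nonneg : ∀ x t, 0 ≤ N x t
  N_le_one : ∀ x t, N x t ≤ 1
  phi_even : ∀ t, phi (-t) = phi t
  phi_one : phi 1 = 1
  phi_strictMono : StrictMonoOn phi (Set.Ioi (0:ℝ))
  phi_cont : ContinuousOn phi (Set.Ioi (0:ℝ))
  phi_lim_zero : Tendsto phi (nhdsWithin 0 (Set.Ioi 0)) (nhds 0)
  phi_lim_top : Tendsto phi atTop atTop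
  bN1 : ∀ x t, t ≤ 0 → N x t = 0
  bN2 : ∀ x, (∀ t > 0, N x t = 1) ↔ x = 0
  bN3 : ∀ (c : ℝ) (x : X) (t : ℝ), 0 < t → phi c ≠ 0 → N (c • x) t = N x (t / phi c)
  bN4 : ∀ (x y : X) (s t : ℝ), op (N x s) (N y t) ≤ N (x + y) (s + K * t)
  bN5_mono : ∀ x : X, Monotone (N x)
  bN5_lim : ∀ x : X, Tendsto (N x) atTop (nhds 1)

/-- The t-norm is continuous at (1,1): sequences tending to 1 combine to 1. -/
def ContAtOneOne (op : ℝ → ℝ → ℝ) : Prop :=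
  ∀ a b : ℕ → ℝ, Tendsto a atTop (nhds 1) → Tendsto b atTop (nhds 1) →
    Tendsto (fun n => op (a n) (b n)) atTop (nhds 1)

noncomputable def N3 (p : ℝ) (x t : ℝ) : ℝ := if 0 < t then t / (t + |x| ^ p) else 0

/-! For `a = |x|^p`, `N3 p x t = t / (t + a)`. The triangle axiom reduces to the mediant inequality
`min (s / (s + a)) (t / (t + b)) ≤ (s + t) / (s + t + (a + b))` together with the subadditivity
`|x + y|^p ≤ |x|^p + |y|^p`, which is where `p ≤ 1` enters; enlarging `t` to `K t` only helps,
since `t / (t + a)` is increasing in `t`. -/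

lemma min_div_le_add_div_add {a b c d : ℝ} (hb : 0 < b) (hd : 0 < d) :
    min (a / b) (c / d) ≤ (a + c) / (b + d) := by
  have hab : min (a / b) (c / d) * b ≤ a := (le_div_iff₀ hb).1 (min_le_left _ _)
  have hcd : min (a / b) (c / d) * d ≤ c := (le_div_iff₀ hd).1 (min_le_right _ _)
  rw [le_div_iff₀ (add_pos hb hd)]
  linarith

lemma div_add_le_div_add_of_le {a s t : ℝ} (ha : 0 ≤ a) (hs : 0 < s) (hst : s ≤ t) :
    s / (s + a) ≤ t / (t + a) := by
  rw [div_le_div_iff₀ (by linarith) (by linarith)]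
  nlinarith

lemma abs_add_rpow_le {p : ℝ} (hp : 0 ≤ p) (hp1 : p ≤ 1) (x y : ℝ) :
    |x + y| ^ p ≤ |x| ^ p + |y| ^ p :=
  calc |x + y| ^ p ≤ (|x| + |y|) ^ p := Real.rpow_le_rpow (abs_nonneg _) (abs_add_le x y) hp
    _ ≤ |x| ^ p + |y| ^ p := Real.rpow_add_le_add_rpow (abs_nonneg x) (abs_nonneg y) hp hp1

lemma continuous_abs_rpow {p : ℝ} (hp : 0 ≤ p) : Continuous fun c : ℝ => |c| ^ p :=
  continuous_abs.rpow_const fun _ => Or.inr hp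

section N3

variable {p : ℝ}

lemma N3_of_pos (x : ℝ) {t : ℝ} (ht : 0 < t) : N3 p x t = t / (t + |x| ^ p) := if_pos ht

lemma N3_of_nonpos (x : ℝ) {t : ℝ} (ht : t ≤ 0) : N3 p x t = 0 := if_neg ht.not_gt

lemma N3_nonneg (x t : ℝ) : 0 ≤ N3 p x t := by
  unfold N3
  split_ifs <;> positivity

lemma N3_le_one (x t : ℝ) : N3 p x t ≤ 1 := by
  rcases le_or_gt t 0 with ht | ht
  · simp [N3_of_nonpos x ht]
  · rw [N3_of_pos x ht, div_le_one₀ (by positivity)]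
    linarith [Real.rpow_nonneg (abs_nonneg x) p]

lemma N3_monotone (x : ℝ) : Monotone (N3 p x) := by
  intro s t hst
  rcases le_or_gt s 0 with hs | hs
  · rw [N3_of_nonpos x hs]
    exact N3_nonneg x t
  · rw [N3_of_pos x hs, N3_of_pos x (hs.trans_le hst)]
    exact div_add_le_div_add_of_le (by positivity) hs hst

lemma N3_eq_one_iff (hp : 0 < p) (x : ℝ) {t : ℝ} (ht : 0 < t) : N3 p x t = 1 ↔ x = 0 := by
  rw [N3_of_pos x ht, div_eq_one_iff_eq (by positivity), left_eq_add,
    Real.rpow_eq_zero (abs_nonneg x) hp.ne', abs_eq_zero]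

lemma N3_mul (c x : ℝ) {t : ℝ} (ht : 0 < t) (hc : |c| ^ p ≠ 0) :
    N3 p (c * x) t = N3 p x (t / |c| ^ p) := by
  have hc' : 0 < |c| ^ p := lt_of_le_of_ne (by positivity) hc.symm
  rw [N3_of_pos _ ht, N3_of_pos _ (div_pos ht hc'), abs_mul,
    Real.mul_rpow (abs_nonneg c) (abs_nonneg x)]
  field_simp

lemma tendsto_N3_atTop (x : ℝ) : Tendsto (N3 p x) atTop (𝓝 1) := by
  have hdecay : Tendsto (fun t => |x| ^ p / (t + |x| ^ p)) atTop (𝓝 0) :=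
    tendsto_const_nhds.div_atTop (tendsto_atTop_add_const_right _ _ tendsto_id)
  have hlim : Tendsto (fun t => 1 - |x| ^ p / (t + |x| ^ p)) atTop (𝓝 1) := by
    simpa using tendsto_const_nhds.sub hdecay
  refine hlim.congr' ?_
  filter_upwards [eventually_gt_atTop 0] with t ht
  rw [N3_of_pos x ht]
  field_simp
  ring

lemma min_N3_le_N3_add (hp : 0 ≤ p) (hp1 : p ≤ 1) {K : ℝ} (hK : 1 ≤ K) (x y s t : ℝ) :
    min (N3 p x s) (N3 p y t) ≤ N3 p (x + y) (s + K * t) := by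
  rcases le_or_gt s 0 with hs | hs
  · exact (min_le_left _ _).trans ((N3_of_nonpos x hs).trans_le (N3_nonneg _ _))
  rcases le_or_gt t 0 with ht | ht
  · exact (min_le_right _ _).trans ((N3_of_nonpos y ht).trans_le (N3_nonneg _ _))
  have hKt : t ≤ K * t := le_mul_of_one_le_left ht.le hK
  rw [N3_of_pos x hs, N3_of_pos y ht, N3_of_pos (x + y) (by linarith)]
  calc min (s / (s + |x| ^ p)) (t / (t + |y| ^ p))
      ≤ (s + t) / (s + t + (|x| ^ p + |y| ^ p)) := by
        rw [add_add_add_comm]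
        exact min_div_le_add_div_add (by positivity) (by positivity)
    _ ≤ (s + t) / (s + t + |x + y| ^ p) :=
        div_le_div_of_nonneg_left (by positivity) (by positivity) (by
          linarith [abs_add_rpow_le hp hp1 x y])
    _ ≤ (s + K * t) / (s + K * t + |x + y| ^ p) :=
        div_add_le_div_add_of_le (by positivity) (by positivity) (by linarith)

end N3

noncomputable def fuzzyStrongPhiBNormN3 (p : ℝ) (hp : 0 < p) (hp1 : p ≤ 1) :
    FuzzyStrongPhiBNorm ℝ where
  N := N3 p
  phi c := |c| ^ p
  K := 2 ^ p
  op := min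
  K_ge_one := Real.one_le_rpow one_le_two hp.le
  N_nonneg := N3_nonneg
  N_le_one := N3_le_one
  phi_even t := by rw [abs_neg]
  phi_one := by simp
  phi_strictMono a ha b hb hab := by
    show |a| ^ p < |b| ^ p
    rw [abs_of_pos ha, abs_of_pos (Set.mem_Ioi.1 hb)]
    exact Real.rpow_lt_rpow (le_of_lt ha) hab hp
  phi_cont := (continuous_abs_rpow hp.le).continuousOn
  phi_lim_zero := by
    simpa [Real.zero_rpow hp.ne'] using
      ((continuous_abs_rpow hp.le).tendsto 0).mono_left nhdsWithin_le_nhds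
  phi_lim_top := (tendsto_rpow_atTop hp).comp tendsto_abs_atTop_atTop
  bN1 x _ ht := N3_of_nonpos x ht
  bN2 x := ⟨fun h => (N3_eq_one_iff hp x one_pos).1 (h 1 one_pos),
    fun hx _ ht => (N3_eq_one_iff hp x ht).2 hx⟩
  bN3 c x _ ht hc := N3_mul c x ht hc
  bN4 := min_N3_le_N3_add hp.le hp1 (Real.one_le_rpow one_le_two hp.le)
  bN5_mono := N3_monotone
  bN5_lim := tendsto_N3_atTop

theorem stmt3 (p : ℝ) (hp : 0 < p) (hp1 : p ≤ 1) :
    (∃ F : FuzzyStrongPhiBNorm ℝ,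
      F.N = N3 p ∧ F.phi = (fun c : ℝ => |c| ^ p) ∧ F.K = 2 ^ p ∧ F.op = min) ∧
    (∀ x y s t : ℝ, 0 < s → 0 < t →
      min (N3 p x s) (N3 p y t) ≤ N3 p (x + y) (2 ^ p * s + t)) := by
  refine ⟨⟨fuzzyStrongPhiBNormN3 p hp hp1, rfl, rfl, rfl, rfl⟩, fun x y s t _ _ => ?_⟩
  rw [min_comm, add_comm x, add_comm (2 ^ p * s)]
  exact min_N3_le_N3_add hp.le hp1 (Real.one_le_rpow one_le_two hp.le) y x t s
end

section
/- For 0 < p ≤ 1, the function N : ℝ × ℝ → [0,1] defined by N(x,t) = exp(−|x|^p/t) for t > 0 and N(x,t) = 0 for t ≤ 0, together with φ(c) = |c|^p, K = 2^p, and the product t-norm a*b = ab, is a fuzzy strong φ-b-norm on ℝ; in particular N(x+y, 2^p·s + t) ≥ N(x,s)·N(y,t) for all x,y ∈ ℝ and s,t > 0. -/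
/-!
For `0 < p ≤ 1` the map `r ↦ r ^ p` is subadditive on `[0, ∞)`, so
`|x + y| ^ p ≤ |x| ^ p + |y| ^ p`. Hence whenever `0 < s, t ≤ u` we get
`|x + y| ^ p / u ≤ |x| ^ p / s + |y| ^ p / t`, and exponentiating gives
`N(x, s) N(y, t) ≤ N(x + y, u)`; the b-triangle inequality is the case `u = a s + b t` with
`a, b ≥ 1`. The remaining axioms are elementary properties of `exp` and of `c ↦ |c| ^ p`.
-/

open Filter Topology

noncomputable def N4 (p : ℝ) (x t : ℝ) : ℝ := if 0 < t then Real.exp (-(|x| ^ p) / t) else 0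

section N4

variable {p : ℝ}

lemma N4_of_pos (x : ℝ) {t : ℝ} (ht : 0 < t) : N4 p x t = Real.exp (-(|x| ^ p) / t) :=
  if_pos ht

lemma N4_of_nonpos (x : ℝ) {t : ℝ} (ht : t ≤ 0) : N4 p x t = 0 :=
  if_neg ht.not_gt

lemma N4_nonneg (x t : ℝ) : 0 ≤ N4 p x t := by
  unfold N4
  split
  · exact (Real.exp_pos _).le
  · rfl

lemma N4_le_one (x t : ℝ) : N4 p x t ≤ 1 := by
  rcases le_or_gt t 0 with ht | ht
  · rw [N4_of_nonpos x ht]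
    exact zero_le_one
  · rw [N4_of_pos x ht, Real.exp_le_one_iff, neg_div, neg_nonpos]
    exact div_nonneg (Real.rpow_nonneg (abs_nonneg x) p) ht.le

lemma N4_monotone (x : ℝ) : Monotone (N4 p x) := by
  intro s t hst
  rcases le_or_gt s 0 with hs | hs
  · rw [N4_of_nonpos x hs]
    exact N4_nonneg x t
  · rw [N4_of_pos x hs, N4_of_pos x (hs.trans_le hst), Real.exp_le_exp, neg_div, neg_div,
      neg_le_neg_iff]
    exact div_le_div_of_nonneg_left (Real.rpow_nonneg (abs_nonneg x) p) hs hst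

lemma tendsto_N4_atTop (x : ℝ) : Tendsto (N4 p x) atTop (𝓝 1) := by
  have hexp : Tendsto (fun t : ℝ => Real.exp (-(|x| ^ p) / t)) atTop (𝓝 1) := by
    rw [← Real.exp_zero]
    exact Real.continuous_exp.continuousAt.tendsto.comp
      (tendsto_const_nhds.div_atTop tendsto_id)
  refine hexp.congr' ?_
  filter_upwards [eventually_gt_atTop 0] with t ht
  exact (N4_of_pos x ht).symm

lemma N4_eq_one_iff (hp : p ≠ 0) (x : ℝ) : (∀ t > 0, N4 p x t = 1) ↔ x = 0 := by
  constructor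
  · intro h
    have h1 := h 1 one_pos
    rw [N4_of_pos x one_pos, div_one, Real.exp_eq_one_iff, neg_eq_zero,
      Real.rpow_eq_zero (abs_nonneg x) hp] at h1
    exact abs_eq_zero.mp h1
  · rintro rfl t ht
    rw [N4_of_pos 0 ht, abs_zero, Real.zero_rpow hp, neg_zero, zero_div, Real.exp_zero]

lemma N4_mul_left (c x : ℝ) {t : ℝ} (ht : 0 < t) (hc : |c| ^ p ≠ 0) :
    N4 p (c * x) t = N4 p x (t / |c| ^ p) := by
  have hc_pos : 0 < |c| ^ p := (Real.rpow_nonneg (abs_nonneg c) p).lt_of_ne' hc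
  rw [N4_of_pos _ ht, N4_of_pos x (div_pos ht hc_pos), abs_mul,
    Real.mul_rpow (abs_nonneg c) (abs_nonneg x), div_div_eq_mul_div]
  ring_nf

lemma N4_mul_le_of_le (hp : 0 ≤ p) (hp1 : p ≤ 1) (x y : ℝ) {s t u : ℝ} (hs : 0 < s)
    (ht : 0 < t) (hsu : s ≤ u) (htu : t ≤ u) :
    N4 p x s * N4 p y t ≤ N4 p (x + y) u := by
  have hu : 0 < u := hs.trans_le hsu
  rw [N4_of_pos x hs, N4_of_pos y ht, N4_of_pos _ hu, ← Real.exp_add, Real.exp_le_exp]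
  have hx := Real.rpow_nonneg (abs_nonneg x) p
  have hy := Real.rpow_nonneg (abs_nonneg y) p
  have key : |x + y| ^ p / u ≤ |x| ^ p / s + |y| ^ p / t :=
    calc |x + y| ^ p / u ≤ (|x| ^ p + |y| ^ p) / u := by gcongr; exact abs_add_rpow_le hp hp1 x y
      _ = |x| ^ p / u + |y| ^ p / u := add_div _ _ _
      _ ≤ |x| ^ p / s + |y| ^ p / t := by gcongr
  simp only [neg_div]
  linarith

lemma N4_mul_le_add_mul (hp : 0 ≤ p) (hp1 : p ≤ 1) {a b : ℝ} (ha : 1 ≤ a) (hb : 1 ≤ b)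
    (x y s t : ℝ) : N4 p x s * N4 p y t ≤ N4 p (x + y) (a * s + b * t) := by
  rcases le_or_gt s 0 with hs | hs
  · rw [N4_of_nonpos x hs, zero_mul]
    exact N4_nonneg _ _
  rcases le_or_gt t 0 with ht | ht
  · rw [N4_of_nonpos y ht, mul_zero]
    exact N4_nonneg _ _
  exact N4_mul_le_of_le hp hp1 x y hs ht (by nlinarith) (by nlinarith)

end N4

noncomputable def N4FuzzyStrongPhiBNorm {p : ℝ} (hp : 0 < p) (hp1 : p ≤ 1) :
    FuzzyStrongPhiBNorm ℝ where
  N := N4 p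
  phi c := |c| ^ p
  K := 2 ^ p
  op a b := a * b
  K_ge_one := Real.one_le_rpow one_le_two hp.le
  N_nonneg := N4_nonneg
  N_le_one := N4_le_one
  phi_even t := by simp only [abs_neg]
  phi_one := by simp only [abs_one, Real.one_rpow]
  phi_strictMono a ha b hb hab := by
    simp only [abs_of_pos (Set.mem_Ioi.mp ha), abs_of_pos (Set.mem_Ioi.mp hb)]
    exact Real.rpow_lt_rpow (Set.mem_Ioi.mp ha).le hab hp
  phi_cont := (continuous_abs_rpow hp.le).continuousOn
  phi_lim_zero := by
    have h := ((continuous_abs_rpow hp.le).tendsto 0).mono_left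
      (nhdsWithin_le_nhds (s := Set.Ioi 0))
    rwa [abs_zero, Real.zero_rpow hp.ne'] at h
  phi_lim_top := (tendsto_rpow_atTop hp).comp tendsto_abs_atTop_atTop
  bN1 _ _ := N4_of_nonpos _
  bN2 := N4_eq_one_iff hp.ne'
  bN3 c x _ ht hc := N4_mul_left c x ht hc
  bN4 x y s t := by
    simpa only [one_mul] using
      N4_mul_le_add_mul hp.le hp1 le_rfl (Real.one_le_rpow one_le_two hp.le) x y s t
  bN5_mono := N4_monotone
  bN5_lim := tendsto_N4_atTop

theorem stmt4 (p : ℝ) (hp : 0 < p) (hp1 : p ≤ 1) :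
    (∃ F : FuzzyStrongPhiBNorm ℝ,
      F.N = N4 p ∧ F.phi = (fun c : ℝ => |c| ^ p) ∧ F.K = 2 ^ p ∧
        F.op = (fun a b : ℝ => a * b)) ∧
    (∀ x y s t : ℝ, 0 < s → 0 < t →
      N4 p x s * N4 p y t ≤ N4 p (x + y) (2 ^ p * s + t)) := by
  refine ⟨⟨N4FuzzyStrongPhiBNorm hp hp1, rfl, rfl, rfl, rfl⟩, fun x y s t _ _ => ?_⟩
  simpa only [one_mul] using
    N4_mul_le_add_mul hp.le hp1 (Real.one_le_rpow one_le_two hp.le) le_rfl x y s t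
end

section
/- Every finite dimensional fuzzy strong φ-b-normed linear space (X, N, φ, K, *) with t-norm * continuous at (1,1) is complete, i.e., every Cauchy sequence in X converges. -/
open Filter Topology

/-!
Fix a basis of `X`. If the coordinates of `u m` tend to `0`, then so does `u m` in the fuzzy
norm: each term `c • v` does by (bN3) and the behaviour of `φ` at `0`, and sums do by (bN4) and
the continuity of `*` at `(1, 1)`. Conversely, if `z j → 0` in the fuzzy norm but its coordinates
do not tend to `0`, normalise a subsequence whose coordinates stay away from `0`; by compactness
of the unit sphere a further subsequence has coordinates converging to a unit vector `γ`. The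
normalised vectors still tend to `0` in the fuzzy norm, hence so does the constant vector with
coordinates `γ`, which is therefore `0` by (bN2), a contradiction. So the coordinates of a fuzzy
Cauchy sequence form a Cauchy sequence in `ℝⁿ`, and their limit is the fuzzy limit.
-/

namespace FuzzyStrongPhiBNorm

variable {X : Type*} [AddCommGroup X] [Module ℝ X] (F : FuzzyStrongPhiBNorm X)

theorem phi_pos {s : ℝ} (hs : 0 < s) : 0 < F.phi s := by
  have h_nonneg : 0 ≤ F.phi (s / 2) := by
    refine le_of_tendsto F.phi_lim_zero ?_
    filter_upwards [Ioo_mem_nhdsGT (half_pos hs)] with u hu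
    exact (F.phi_strictMono hu.1 (half_pos hs) hu.2).le
  exact h_nonneg.trans_lt (F.phi_strictMono (half_pos hs) hs (half_lt_self hs))

theorem phi_abs (c : ℝ) : F.phi |c| = F.phi c := by
  rcases abs_choice c with h | h <;> simp only [h, F.phi_even]

theorem phi_ne_zero {c : ℝ} (hc : c ≠ 0) : F.phi c ≠ 0 := by
  rw [← phi_abs]
  exact (F.phi_pos (abs_pos.2 hc)).ne'

theorem N_zero {t : ℝ} (ht : 0 < t) : F.N 0 t = 1 := (F.bN2 0).2 rfl t ht

theorem tendsto_phi_nhdsGT_zero : Tendsto F.phi (𝓝[>] 0) (𝓝[>] 0) :=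
  tendsto_nhdsWithin_iff.2
    ⟨F.phi_lim_zero, eventually_nhdsWithin_of_forall fun _ hs => F.phi_pos hs⟩

theorem tendsto_N_smul_nhds_zero (v : X) {t : ℝ} (ht : 0 < t) :
    Tendsto (fun c : ℝ => F.N (c • v) t) (𝓝 0) (𝓝 1) := by
  have h_at_zero : F.N ((0 : ℝ) • v) t = 1 := by rw [zero_smul, F.N_zero ht]
  suffices ContinuousWithinAt (fun c : ℝ => F.N (c • v) t) {0}ᶜ 0 by
    simpa only [ContinuousAt, h_at_zero] using continuousWithinAt_compl_self.1 this
  rw [ContinuousWithinAt, h_at_zero]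
  have h_scale : Tendsto (fun c : ℝ => t / F.phi |c|) (𝓝[≠] 0) atTop := by
    simpa only [div_eq_mul_inv, Function.comp_def] using
      (tendsto_inv_nhdsGT_zero.comp
        (F.tendsto_phi_nhdsGT_zero.comp tendsto_abs_nhdsNE_zero)).const_mul_atTop ht
  refine ((F.bN5_lim v).comp h_scale).congr' ?_
  filter_upwards [self_mem_nhdsWithin] with c hc
  simp only [Function.comp_apply, phi_abs, F.bN3 c v t ht (F.phi_ne_zero hc)]

def TendstoZero (u : ℕ → X) : Prop :=
  ∀ t > 0, Tendsto (fun m => F.N (u m) t) atTop (𝓝 1)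

variable {F}

theorem TendstoZero.comp {u : ℕ → X} (hu : F.TendstoZero u) {φ : ℕ → ℕ}
    (hφ : Tendsto φ atTop atTop) : F.TendstoZero (u ∘ φ) :=
  fun t ht => (hu t ht).comp hφ

theorem tendstoZero_zero : F.TendstoZero (fun _ => 0) :=
  fun t ht => by simp only [F.N_zero ht, tendsto_const_nhds]

theorem eq_zero_of_tendstoZero_const {v : X} (hv : F.TendstoZero (fun _ => v)) : v = 0 :=
  (F.bN2 v).1 fun t ht => tendsto_nhds_unique tendsto_const_nhds (hv t ht)

theorem tendstoZero_smul_const {a : ℕ → ℝ} (ha : Tendsto a atTop (𝓝 0)) (v : X) :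
    F.TendstoZero (fun m => a m • v) :=
  fun _ ht => (F.tendsto_N_smul_nhds_zero v ht).comp ha

theorem TendstoZero.smul_of_le {u : ℕ → X} (hu : F.TendstoZero u) {a : ℕ → ℝ} {C : ℝ}
    (ha_pos : ∀ m, 0 < a m) (ha_le : ∀ m, a m ≤ C) : F.TendstoZero (fun m => a m • u m) := by
  intro t ht
  have hC : 0 < C := (ha_pos 0).trans_le (ha_le 0)
  refine tendsto_of_tendsto_of_tendsto_of_le_of_le (hu _ (div_pos ht (F.phi_pos hC)))
    tendsto_const_nhds (fun m => ?_) (fun m => F.N_le_one _ _)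
  rw [F.bN3 _ _ t ht (F.phi_ne_zero (ha_pos m).ne')]
  refine F.bN5_mono _ (div_le_div_of_nonneg_left ht.le (F.phi_pos (ha_pos m)) ?_)
  exact F.phi_strictMono.monotoneOn (ha_pos m) hC (ha_le m)

theorem TendstoZero.add (hop : ContAtOneOne F.op) {u w : ℕ → X} (hu : F.TendstoZero u)
    (hw : F.TendstoZero w) : F.TendstoZero (u + w) := by
  intro t ht
  have hK : 0 < F.K := one_pos.trans_le F.K_ge_one
  have h_split : t / 2 + F.K * (t / (2 * F.K)) = t := by field_simp; ring
  refine tendsto_of_tendsto_of_tendsto_of_le_of_le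
    (hop (fun m => F.N (u m) (t / 2)) (fun m => F.N (w m) (t / (2 * F.K)))
      (hu _ (half_pos ht)) (hw _ (by positivity))) tendsto_const_nhds
    (fun m => ?_) (fun m => F.N_le_one _ _)
  simpa only [Pi.add_apply, h_split] using F.bN4 (u m) (w m) (t / 2) (t / (2 * F.K))

theorem tendstoZero_sum (hop : ContAtOneOne F.op) {ι : Type*} (s : Finset ι)
    {u : ι → ℕ → X} (hu : ∀ i ∈ s, F.TendstoZero (u i)) :
    F.TendstoZero (fun m => ∑ i ∈ s, u i m) := by
  classical
  induction s using Finset.induction_on with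
  | empty => simpa only [Finset.sum_empty] using tendstoZero_zero
  | insert j s hj ih =>
    simp only [Finset.sum_insert hj]
    exact (hu j (s.mem_insert_self j)).add hop (ih fun i hi => hu i (s.mem_insert_of_mem hi))

variable {ι : Type*} [Fintype ι] (b : Module.Basis ι ℝ X)

theorem tendstoZero_of_tendsto_equivFun (hop : ContAtOneOne F.op) {u : ℕ → X}
    (hu : Tendsto (fun m => b.equivFun (u m)) atTop (𝓝 0)) : F.TendstoZero u := by
  have h_coord (i : ι) : Tendsto (fun m => b.equivFun (u m) i) atTop (𝓝 0) :=
    tendsto_pi_nhds.1 hu i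
  simpa only [b.sum_equivFun] using
    tendstoZero_sum hop Finset.univ fun i _ => tendstoZero_smul_const (h_coord i) (b i)

theorem tendsto_equivFun_of_tendstoZero (hop : ContAtOneOne F.op) {z : ℕ → X}
    (hz : F.TendstoZero z) : Tendsto (fun j => b.equivFun (z j)) atTop (𝓝 0) := by
  by_contra h_not
  obtain ⟨ε, hε, h_freq⟩ : ∃ ε > 0, ∃ᶠ j in atTop, ε ≤ ‖b.equivFun (z j)‖ := by
    simpa only [Metric.tendsto_nhds, dist_zero_right, not_forall, not_eventually, not_lt,
      exists_prop] using h_not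
  obtain ⟨ψ, hψ, hψε⟩ := extraction_of_frequently_atTop h_freq
  have h_pos (j : ℕ) : 0 < ‖b.equivFun (z (ψ j))‖ := hε.trans_le (hψε j)
  set w : ℕ → X := fun j => ‖b.equivFun (z (ψ j))‖⁻¹ • z (ψ j)
  have hw : F.TendstoZero w :=
    (hz.comp hψ.tendsto_atTop).smul_of_le (fun j => inv_pos.2 (h_pos j))
      (fun j => inv_anti₀ hε (hψε j))
  have hw_sphere (j : ℕ) : b.equivFun (w j) ∈ Metric.sphere 0 1 := by
    rw [mem_sphere_zero_iff_norm, map_smul, norm_smul, norm_inv, norm_norm,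
      inv_mul_cancel₀ (h_pos j).ne']
  obtain ⟨γ, hγ, φ, hφ, h_lim⟩ := (isCompact_sphere (0 : ι → ℝ) 1).tendsto_subseq hw_sphere
  have h_diff : F.TendstoZero (fun k => b.equivFun.symm γ - w (φ k)) := by
    refine tendstoZero_of_tendsto_equivFun b hop ?_
    simpa only [map_sub, LinearEquiv.apply_symm_apply, sub_self, Function.comp_def] using
      (tendsto_const_nhds (x := γ)).sub h_lim
  have h_const : F.TendstoZero (fun _ => b.equivFun.symm γ) := by
    simpa only [Pi.add_def, Function.comp_apply, sub_add_cancel] using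
      h_diff.add hop (hw.comp hφ.tendsto_atTop)
  have hγ_zero : γ = 0 := by
    simpa only [map_zero, LinearEquiv.apply_symm_apply] using
      congrArg b.equivFun (eq_zero_of_tendstoZero_const h_const)
  simp only [hγ_zero, mem_sphere_iff_norm, sub_zero, norm_zero] at hγ
  exact zero_ne_one hγ

theorem cauchySeq_equivFun (hop : ContAtOneOne F.op) {x : ℕ → X}
    (hx : ∀ t > 0, Tendsto (fun q : ℕ × ℕ => F.N (x q.1 - x q.2) t) atTop (𝓝 1)) :
    CauchySeq (fun m => b.equivFun (x m)) := by
  rw [cauchySeq_iff_tendsto_dist_atTop_0]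
  simp only [dist_eq_norm, ← map_sub]
  refine tendsto_zero_iff_norm_tendsto_zero.1 (tendsto_iff_seq_tendsto.2 fun q hq => ?_)
  exact tendsto_equivFun_of_tendstoZero b hop fun t ht => (hx t ht).comp hq

end FuzzyStrongPhiBNorm

open FuzzyStrongPhiBNorm in
theorem stmt11 {X : Type*} [AddCommGroup X] [Module ℝ X] [FiniteDimensional ℝ X]
    (F : FuzzyStrongPhiBNorm X) (hop : ContAtOneOne F.op)
    (x : ℕ → X)
    (hcauchy : ∀ t > 0,
      Tendsto (fun q : ℕ × ℕ => F.N (x q.1 - x q.2) t) atTop (nhds 1)) :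
    ∃ x₀ : X, ∀ t > 0, Tendsto (fun m => F.N (x m - x₀) t) atTop (nhds 1) := by
  let b := Module.finBasis ℝ X
  obtain ⟨γ, hγ⟩ := cauchySeq_tendsto_of_complete (cauchySeq_equivFun b hop hcauchy)
  refine ⟨b.equivFun.symm γ, tendstoZero_of_tendsto_equivFun b hop ?_⟩
  simpa only [map_sub, LinearEquiv.apply_symm_apply, sub_self] using
    hγ.sub (tendsto_const_nhds (x := γ))
end

section
/- Let A be a compact subset of a fuzzy strong φ-b-normed linear space (X, N, φ, K, *) with * continuous at (1,1). Then A is fuzzy bounded: for each r with 0 < r < 1, there exists t > 0 such that N(x, t) > 1 − r for all x ∈ A. -/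
open Filter Topology

/-! If `A` were not bounded, there would be points `xₙ ∈ A` with `N(xₙ, 1 + K n) ≤ 1 - r`.
A subsequence converges fuzzily to some `y`, and by (bN4)
`N(x_{φ k}, 1 + K φ k) ≥ N(x_{φ k} - y, 1) * N(y, φ k)`; both factors tend to `1`, so by continuity
of `*` at `(1,1)` the left side tends to `1`, contradicting the bound `1 - r`. -/

namespace FuzzyStrongPhiBNorm

variable {X : Type*} [AddCommGroup X] [Module ℝ X] (F : FuzzyStrongPhiBNorm X)

theorem tendsto_N_of_tendsto_N_sub (hop : ContAtOneOne F.op) {x : ℕ → X} {y : X} {s : ℝ}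
    (hxy : Tendsto (fun k => F.N (x k - y) s) atTop (𝓝 1))
    {t : ℕ → ℝ} (ht : Tendsto t atTop atTop) :
    Tendsto (fun k => F.N (x k) (s + F.K * t k)) atTop (𝓝 1) := by
  have hlower : Tendsto (fun k => F.op (F.N (x k - y) s) (F.N y (t k))) atTop (𝓝 1) :=
    hop _ _ hxy ((F.bN5_lim y).comp ht)
  refine tendsto_of_tendsto_of_tendsto_of_le_of_le hlower tendsto_const_nhds (fun k => ?_)
    (fun k => F.N_le_one _ _)
  simpa only [sub_add_cancel] using F.bN4 (x k - y) y s (t k)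

end FuzzyStrongPhiBNorm

theorem stmt13 {X : Type*} [AddCommGroup X] [Module ℝ X]
    (F : FuzzyStrongPhiBNorm X) (hop : ContAtOneOne F.op) (A : Set X)
    (hcompact : ∀ x : ℕ → X, (∀ m, x m ∈ A) →
      ∃ (y : X) (_ : y ∈ A) (φ : ℕ → ℕ), StrictMono φ ∧
        ∀ t > 0, Tendsto (fun k => F.N (x (φ k) - y) t) atTop (nhds 1)) :
    ∀ r : ℝ, 0 < r → r < 1 → ∃ t > 0, ∀ x ∈ A, F.N x t > 1 - r := by
  intro r hr _
  by_contra! hunbounded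
  have hK : (0 : ℝ) ≤ F.K := zero_le_one.trans F.K_ge_one
  choose x hxA hxN using fun n : ℕ => hunbounded (1 + F.K * n) (by positivity)
  obtain ⟨y, -, φ, hφ, hconv⟩ := hcompact x hxA
  have hφ_top : Tendsto (fun k => (φ k : ℝ)) atTop atTop :=
    tendsto_natCast_atTop_atTop.comp hφ.tendsto_atTop
  have hlim := F.tendsto_N_of_tendsto_N_sub hop (hconv 1 one_pos) hφ_top
  obtain ⟨k, hk⟩ := (hlim.eventually (lt_mem_nhds (by linarith : 1 - r < 1))).exists
  exact (hxN (φ k)).not_gt hk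
end
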